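/- For every n ≥ 1, the identity B_n^+(x) = (1−x)^n · Σ_{i≥0} ((2i+1)^n − (2i)^n) x^i holds in the ring of formal power series ℝ⟦x⟧; equivalently, B_n^+(x)/(1−x)^n = Σ_{i≥0} ((2i+1)^n − (2i)^n) x^i. -/

import Mathlib

open Polynomial Finset

/-- A signed permutation of `[n]`, encoded by its word: position `i` (0-indexed)
holds the pair (absolute value minus one, sign) of the letter `w(a_{i+1})`. -/
def IsSP {n : ℕ} (u : Fin n → Fin n × Bool) : Prop :=
  Function.Bijective fun i => (u i).1

instance {n : ℕ} (u : Fin n → Fin n × Bool) : Decidable (IsSP u) :=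
  inferInstanceAs (Decidable (Function.Bijective _))

/-- the letter `w(a_{i+1})` at position `i` of the word -/
def letterW {n : ℕ} (u : Fin n → Fin n × Bool) (i : Fin n) : ℤ :=
  if (u i).2 then ((u i).1 : ℤ) + 1 else -(((u i).1 : ℤ) + 1)

/-- `a_{k+1}`: the element of the domain `S` with absolute value `k+1` -/
def aVal {n : ℕ} (u : Fin n → Fin n × Bool) (k : Fin n) : ℤ :=
  if ∃ j, u j = (k, true) then ((k : ℤ) + 1) else -((k : ℤ) + 1)

/-- the number of type `B` excedances -/
def excB {n : ℕ} (u : Fin n → Fin n × Bool) : ℕ :=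
  (univ.filter fun k : Fin n =>
    aVal u k < letterW u k ∨ (aVal u k < 0 ∧ letterW u k = aVal u k)).card

/-- a derangement: no positive fixed point -/
def IsDerB {n : ℕ} (u : Fin n → Fin n × Bool) : Prop :=
  ∀ k : Fin n, 0 < aVal u k → letterW u k ≠ aVal u k

instance {n : ℕ} (u : Fin n → Fin n × Bool) : Decidable (IsDerB u) := by
  unfold IsDerB; infer_instance

/-- the type `B` derangement polynomial -/
noncomputable def dB (n : ℕ) : Polynomial ℝ :=
  ∑ u ∈ univ.filter (fun u : Fin n → Fin n × Bool => IsSP u ∧ IsDerB u), X ^ excB u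

/-- the number of type `B` descents -/
def desB {n : ℕ} (u : Fin n → Fin n × Bool) : ℕ :=
  (univ.filter fun i : Fin n =>
    ((i : ℕ) = 0 ∧ letterW u i < 0) ∨
    (0 < (i : ℕ) ∧ letterW u i < letterW u ⟨(i : ℕ) - 1, by have := i.isLt; omega⟩)).card

/-- the type `B` Eulerian polynomial -/
noncomputable def Bpoly (n : ℕ) : Polynomial ℝ :=
  ∑ u ∈ univ.filter (fun u : Fin n → Fin n × Bool => IsSP u), X ^ desB u

/-- the "positive half" type `B` Eulerian polynomial -/
noncomputable def Bplus : ℕ → Polynomial ℝ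
  | 0 => 1
  | n + 1 =>
    ∑ u ∈ univ.filter (fun u : Fin (n + 1) → Fin (n + 1) × Bool =>
        IsSP u ∧ 0 < letterW u (Fin.last n)), X ^ desB u

/-- the "negative half" type `B` Eulerian polynomial -/
noncomputable def Bminus : ℕ → Polynomial ℝ
  | 0 => 0
  | n + 1 =>
    ∑ u ∈ univ.filter (fun u : Fin (n + 1) → Fin (n + 1) × Bool =>
        IsSP u ∧ letterW u (Fin.last n) < 0), X ^ desB u

/-- the number of excedances of a permutation -/
def excA {n : ℕ} (w : Equiv.Perm (Fin n)) : ℕ :=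
  (univ.filter fun i : Fin n => i < w i).card

/-- the number of descents of a permutation -/
def desA {n : ℕ} (w : Equiv.Perm (Fin n)) : ℕ :=
  (univ.filter fun i : Fin n =>
    (i : ℕ) + 1 < n ∧ w ⟨((i : ℕ) + 1) % n, Nat.mod_lt _ i.pos⟩ < w i).card

/-- the (type `A`) derangement polynomial -/
noncomputable def dA (n : ℕ) : Polynomial ℝ :=
  ∑ w ∈ univ.filter (fun w : Equiv.Perm (Fin n) => ∀ i, w i ≠ i), X ^ excA w

/-- the Eulerian polynomial, with the convention `A_0 = 0` -/
noncomputable def Apoly (n : ℕ) : Polynomial ℝ :=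
  if n = 0 then 0 else ∑ w : Equiv.Perm (Fin n), X ^ desA w


/-!
Removing the letter of largest absolute value `n + 1` from a signed permutation of `[n + 1]`
leaves a signed permutation of `[n]`, and conversely that letter can be reinserted at any of the
`n + 1` positions with either sign. Reading descents in the word `0 w(a_1) … w(a_n)`, the new
letter adds a descent unless it splits an existing one, except at the end, where it adds a
descent iff it is negative. Summing over insertions gives
`B_{n+1} = (1 + x) B_n + 2 (n x B_n + x (1 - x) B_n')` and
`B_{n+1}^+ = B_n + 2 (n x B_n^+ + x (1 - x) (B_n^+)')`.
Since `(1 - x) ((1 - x)^k)' = -k (1 - x)^k`, writing `B_n = (1 - x)^{n+1} F_n` and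
`B_n^+ = (1 - x)^n Φ_n` turns these into `F_{n+1} = F_n + 2 x F_n'` and
`Φ_{n+1} = F_n + 2 x Φ_n'`, which hold coefficientwise for `F_n = ∑ (2i+1)^n x^i` and
`Φ_n = ∑ ((2i+1)^n - (2i)^n) x^i`.
-/

section Descents

def countDescents (z : ℕ → ℤ) (n : ℕ) : ℕ :=
  ∑ k ∈ range n, if z (k + 1) < z k then 1 else 0

def insertAt (z : ℕ → ℤ) (p : ℕ) (b : ℤ) (k : ℕ) : ℤ :=
  if k ≤ p then z k else if k = p + 1 then b else z (k - 1)

lemma countDescents_succ (z : ℕ → ℤ) (n : ℕ) :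
    countDescents z (n + 1) = countDescents z n + if z (n + 1) < z n then 1 else 0 :=
  sum_range_succ _ _

lemma countDescents_congr {z z' : ℕ → ℤ} {n : ℕ} (h : ∀ k ≤ n, z k = z' k) :
    countDescents z n = countDescents z' n :=
  sum_congr rfl fun k hk => by
    rw [mem_range] at hk
    rw [h k hk.le, h (k + 1) hk]

lemma insertAt_of_le {z : ℕ → ℤ} {p k : ℕ} (b : ℤ) (h : k ≤ p) : insertAt z p b k = z k :=
  if_pos h

lemma insertAt_succ_self (z : ℕ → ℤ) (p : ℕ) (b : ℤ) : insertAt z p b (p + 1) = b := by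
  rw [insertAt, if_neg (by omega), if_pos rfl]

lemma insertAt_succ_of_lt {z : ℕ → ℤ} {p k : ℕ} (b : ℤ) (h : p < k) :
    insertAt z p b (k + 1) = z k := by
  rw [insertAt, if_neg (by omega), if_neg (by omega), Nat.add_sub_cancel]

lemma countDescents_insertAt_self (z : ℕ → ℤ) (p : ℕ) (b : ℤ) :
    countDescents (insertAt z p b) (p + 1) = countDescents z p + if b < z p then 1 else 0 := by
  rw [countDescents_succ, countDescents_congr fun k hk => insertAt_of_le b hk,
    insertAt_succ_self, insertAt_of_le b le_rfl]

lemma countDescents_insertAt_of_lt (z : ℕ → ℤ) {p n : ℕ} (b : ℤ) (hpn : p < n) :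
    countDescents (insertAt z p b) (n + 1) + (if z (p + 1) < z p then 1 else 0)
      = countDescents z n + (if b < z p then 1 else 0) + if z (p + 1) < b then 1 else 0 := by
  induction n, hpn using Nat.le_induction with
  | base =>
    rw [countDescents_succ, countDescents_insertAt_self, countDescents_succ z,
      insertAt_succ_of_lt b p.lt_add_one, insertAt_succ_self]
    omega
  | succ n hpn ih =>
    rw [countDescents_succ, countDescents_succ z, insertAt_succ_of_lt b (by omega),
      insertAt_succ_of_lt b hpn]
    omega

end Descents

section Words

variable {m : ℕ}

/-- The word `0, w(a_1), …, w(a_m)` padded with zeros, whose descents `desB u` counts. -/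
def letterSeq (u : Fin m → Fin m × Bool) : ℕ → ℤ
  | 0 => 0
  | k + 1 => if h : k < m then letterW u ⟨k, h⟩ else 0

lemma letterSeq_succ (u : Fin m → Fin m × Bool) (i : Fin m) :
    letterSeq u (i + 1) = letterW u i :=
  dif_pos i.isLt

lemma letterSeq_succ_of_le (u : Fin m → Fin m × Bool) {k : ℕ} (hk : m ≤ k) :
    letterSeq u (k + 1) = 0 :=
  dif_neg (by omega)

lemma abs_letterW_le (u : Fin m → Fin m × Bool) (i : Fin m) : |letterW u i| ≤ m := by
  have := (u i).1.isLt
  unfold letterW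
  split <;> rw [abs_le] <;> omega

lemma abs_letterSeq_le (u : Fin m → Fin m × Bool) (k : ℕ) : |letterSeq u k| ≤ m := by
  rcases k with _ | k
  · simp [letterSeq]
  by_cases hk : m ≤ k
  · simp [letterSeq_succ_of_le u hk]
  · exact letterSeq_succ u ⟨k, by omega⟩ ▸ abs_letterW_le u _

lemma desB_eq_countDescents (u : Fin m → Fin m × Bool) :
    desB u = countDescents (letterSeq u) m := by
  rw [desB, card_filter, countDescents, ← Fin.sum_univ_eq_sum_range]
  refine sum_congr rfl fun i _ => if_congr ?_ rfl rfl
  rw [letterSeq_succ]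
  obtain ⟨_ | k, hk⟩ := i
  · simp [letterSeq]
  · have := letterSeq_succ u ⟨k, by omega⟩
    simp_all

def insertMax (v : Fin m → Fin m × Bool) (p : Fin (m + 1)) (ε : Bool) :
    Fin (m + 1) → Fin (m + 1) × Bool :=
  Fin.insertNth p (Fin.last m, ε) fun j => ((v j).1.castSucc, (v j).2)

lemma letterW_insertMax_succAbove (v : Fin m → Fin m × Bool) (p : Fin (m + 1)) (ε : Bool)
    (j : Fin m) : letterW (insertMax v p ε) (p.succAbove j) = letterW v j := by
  simp [insertMax, letterW]

lemma letterW_insertMax_self (v : Fin m → Fin m × Bool) (p : Fin (m + 1)) (ε : Bool) :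
    letterW (insertMax v p ε) p = if ε then (m : ℤ) + 1 else -((m : ℤ) + 1) := by
  simp [insertMax, letterW]

lemma letterSeq_insertMax (v : Fin m → Fin m × Bool) (p : Fin (m + 1)) (ε : Bool) :
    letterSeq (insertMax v p ε)
      = insertAt (letterSeq v) p (if ε then (m : ℤ) + 1 else -((m : ℤ) + 1)) := by
  funext k
  rcases k with _ | k
  · rfl
  by_cases hk : m + 1 ≤ k
  · obtain ⟨k, rfl⟩ : ∃ j, k = j + 1 := ⟨k - 1, by omega⟩
    rw [letterSeq_succ_of_le _ hk, insertAt_succ_of_lt _ (by omega),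
      letterSeq_succ_of_le _ (by omega)]
  obtain ⟨i, rfl⟩ : ∃ i : Fin (m + 1), (i : ℕ) = k := ⟨⟨k, by omega⟩, rfl⟩
  rw [letterSeq_succ]
  rcases Fin.eq_self_or_eq_succAbove p i with rfl | ⟨j, rfl⟩
  · rw [letterW_insertMax_self, insertAt_succ_self]
  rw [letterW_insertMax_succAbove, ← letterSeq_succ]
  rcases lt_or_ge j.castSucc p with h | h
  · rw [Fin.succAbove_of_castSucc_lt _ _ h, insertAt_of_le _ (Fin.lt_def.mp h)]
    rfl
  · rw [Fin.succAbove_of_le_castSucc _ _ h, Fin.val_succ,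
      insertAt_succ_of_lt (k := (j : ℕ) + 1) _ (Fin.le_castSucc_iff.mp h)]

end Words

section Insertion

variable {m : ℕ}

/-- Being larger in absolute value than its neighbours, the letter `±(m + 1)` forms exactly one
descent with them, and replaces the comparison between them. -/
lemma desB_insertMax_castSucc (v : Fin m → Fin m × Bool) (p : Fin m) (ε : Bool) :
    desB (insertMax v p.castSucc ε) + (if letterSeq v (p + 1) < letterSeq v p then 1 else 0)
      = desB v + 1 := by
  have h₁ := abs_le.mp (abs_letterSeq_le v p)
  have h₂ := abs_le.mp (abs_letterSeq_le v (p + 1))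
  rw [desB_eq_countDescents, desB_eq_countDescents, letterSeq_insertMax, Fin.val_castSucc,
    countDescents_insertAt_of_lt _ _ p.isLt]
  cases ε <;> split_ifs <;> omega

lemma desB_insertMax_last (v : Fin m → Fin m × Bool) (ε : Bool) :
    desB (insertMax v (Fin.last m) ε) = desB v + if ε then 0 else 1 := by
  have := abs_le.mp (abs_letterSeq_le v m)
  rw [desB_eq_countDescents, desB_eq_countDescents, letterSeq_insertMax, Fin.val_last,
    countDescents_insertAt_self]
  cases ε <;> split_ifs <;> omega

lemma sum_X_pow_desB_insertMax_castSucc (v : Fin m → Fin m × Bool) (ε : Bool) :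
    ∑ p : Fin m, (X : ℝ[X]) ^ desB (insertMax v p.castSucc ε)
      = (m : ℝ[X]) * X * X ^ desB v + X * (1 - X) * derivative (X ^ desB v) := by
  set d := desB v with hd
  set δ : Fin m → ℕ := fun p => if letterSeq v (p + 1) < letterSeq v p then 1 else 0 with hδ
  have hterm (p : Fin m) : (X : ℝ[X]) ^ desB (insertMax v p.castSucc ε)
      = X ^ (d + 1) + (δ p : ℝ[X]) * (X ^ d - X ^ (d + 1)) := by
    have := desB_insertMax_castSucc v p ε
    simp only [hδ]
    split_ifs at this ⊢
    · rw [show desB (insertMax v p.castSucc ε) = d by omega]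
      simp
    · rw [show desB (insertMax v p.castSucc ε) = d + 1 by omega]
      simp
  have hcount : ∑ p : Fin m, (δ p : ℝ[X]) = d := by
    rw [hd, desB_eq_countDescents, countDescents, ← Fin.sum_univ_eq_sum_range, Nat.cast_sum]
  rw [sum_congr rfl fun p _ => hterm p, sum_add_distrib, ← sum_mul, hcount, derivative_X_pow]
  rcases d with _ | d
  · simp
  · simp only [sum_const, card_univ, Fintype.card_fin, nsmul_eq_mul, map_natCast]
    push_cast
    ring

end Insertion

section Bijection

variable {m : ℕ}

lemma isSP_insertMax_iff (v : Fin m → Fin m × Bool) (p : Fin (m + 1)) (ε : Bool) :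
    IsSP (insertMax v p ε) ↔ IsSP v := by
  have hfst : (fun i => (insertMax v p ε i).1)
      = Fin.cons (Fin.last m) (Fin.castSucc ∘ fun j => (v j).1) ∘ p.cycleRange := by
    rw [Fin.cons_comp_cycleRange]
    funext i
    rcases Fin.eq_self_or_eq_succAbove p i with rfl | ⟨j, rfl⟩ <;> simp [insertMax]
  rw [IsSP, IsSP, hfst, ← Finite.injective_iff_bijective, ← Finite.injective_iff_bijective,
    Function.Injective.of_comp_iff' _ p.cycleRange.bijective, Fin.cons_injective_iff,
    (Fin.castSucc_injective m).of_comp_iff]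
  simp [Fin.castSucc_ne_last]

lemma insertMax_injective :
    Function.Injective fun t : (Fin m → Fin m × Bool) × Fin (m + 1) × Bool =>
      insertMax t.1 t.2.1 t.2.2 := by
  rintro ⟨v, p, ε⟩ ⟨v', p', ε'⟩ h
  simp only at h
  obtain rfl : p = p' := by
    by_contra hne
    obtain ⟨j, hj⟩ := Fin.exists_succAbove_eq (Ne.symm hne)
    have := congrArg Prod.fst (congrFun h p')
    rw [← hj] at this
    simp [insertMax, Fin.castSucc_ne_last] at this
  obtain ⟨hε, hv⟩ := Fin.insertNth_inj.mp h
  simp only [Prod.mk.injEq, true_and] at hε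
  subst hε
  refine Prod.ext (funext fun j => ?_) rfl
  have := congrFun hv j
  simp only [Prod.mk.injEq, Fin.castSucc_inj] at this
  exact Prod.ext this.1 this.2

lemma exists_insertMax_eq {u : Fin (m + 1) → Fin (m + 1) × Bool} (hu : IsSP u) :
    ∃ v p ε, insertMax v p ε = u := by
  obtain ⟨p, hp⟩ := hu.surjective (Fin.last m)
  have hne (j : Fin m) : (u (p.succAbove j)).1 ≠ Fin.last m := fun h =>
    Fin.succAbove_ne p j (hu.injective (h.trans hp.symm))
  refine ⟨fun j => ((u (p.succAbove j)).1.castPred (hne j), (u (p.succAbove j)).2), p,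
    (u p).2, Fin.insertNth_eq_iff.mpr ⟨Prod.ext hp.symm rfl, ?_⟩⟩
  funext j
  simp [Fin.removeNth]

lemma sum_isSP_succ_eq_sum_insertMax {M : Type*} [AddCommMonoid M]
    (f : (Fin (m + 1) → Fin (m + 1) × Bool) → M) :
    ∑ u ∈ univ.filter (fun u => IsSP u), f u
      = ∑ v ∈ univ.filter (fun v => IsSP v), ∑ p, ∑ ε, f (insertMax v p ε) := by
  have hprod : ∑ v ∈ univ.filter (fun v => IsSP v), ∑ p, ∑ ε, f (insertMax v p ε)
      = ∑ t ∈ univ.filter (fun v => IsSP v) ×ˢ (univ : Finset (Fin (m + 1) × Bool)),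
          f (insertMax t.1 t.2.1 t.2.2) := by
    rw [sum_product]
    exact sum_congr rfl fun v _ => (Fintype.sum_prod_type' _).symm
  rw [hprod]
  symm
  refine sum_nbij (fun t => insertMax t.1 t.2.1 t.2.2) ?_ insertMax_injective.injOn ?_
    fun _ _ => rfl
  · intro t ht
    simp only [mem_product, mem_filter, mem_univ, true_and, and_true] at ht ⊢
    exact (isSP_insertMax_iff _ _ _).mpr ht
  · intro u hu
    simp only [coe_filter, mem_univ, true_and] at hu
    obtain ⟨v, p, ε, rfl⟩ := exists_insertMax_eq hu
    refine ⟨(v, p, ε), ?_, rfl⟩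
    simpa using (isSP_insertMax_iff v p ε).mp hu

end Bijection

section Recursions

variable {m : ℕ}

lemma sum_X_pow_desB_insertMax (v : Fin m → Fin m × Bool) :
    ∑ p, ∑ ε, (X : ℝ[X]) ^ desB (insertMax v p ε)
      = (1 + X) * X ^ desB v
        + 2 * ((m : ℝ[X]) * X * X ^ desB v + X * (1 - X) * derivative (X ^ desB v)) := by
  rw [sum_comm, Fintype.sum_bool]
  simp only [Fin.sum_univ_castSucc, sum_X_pow_desB_insertMax_castSucc, desB_insertMax_last,
    Bool.false_eq_true, if_true, if_false, add_zero, pow_succ]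
  ring

lemma letterW_insertMax_castSucc_last (v : Fin (m + 1) → Fin (m + 1) × Bool) (p : Fin (m + 1))
    (ε : Bool) :
    letterW (insertMax v p.castSucc ε) (Fin.last (m + 1)) = letterW v (Fin.last m) := by
  rw [← Fin.succ_last, ← Fin.succAbove_of_le_castSucc _ _ (Fin.castSucc_le_castSucc_iff.mpr
    (Fin.le_last p)), letterW_insertMax_succAbove]

lemma sum_ite_pos_last_X_pow_desB_insertMax (v : Fin (m + 1) → Fin (m + 1) × Bool) :
    ∑ p, ∑ ε, (if 0 < letterW (insertMax v p ε) (Fin.last (m + 1))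
        then (X : ℝ[X]) ^ desB (insertMax v p ε) else 0)
      = X ^ desB v + if 0 < letterW v (Fin.last m) then
          2 * (((m + 1 : ℕ) : ℝ[X]) * X * X ^ desB v + X * (1 - X) * derivative (X ^ desB v))
        else 0 := by
  have hpos : (0 : ℤ) < ((m + 1 : ℕ) : ℤ) + 1 := by positivity
  have hneg : ¬(0 : ℤ) < -(((m + 1 : ℕ) : ℤ) + 1) := by omega
  rw [sum_comm, Fintype.sum_bool]
  simp only [Fin.sum_univ_castSucc (n := m + 1), letterW_insertMax_castSucc_last,
    letterW_insertMax_self, desB_insertMax_last]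
  by_cases hv : 0 < letterW v (Fin.last m)
  · simp only [hv, hpos, hneg, if_true, if_false, Bool.false_eq_true,
      sum_X_pow_desB_insertMax_castSucc]
    ring
  · simp only [hv, hpos, hneg, if_true, if_false, Bool.false_eq_true, sum_const_zero, add_zero,
      zero_add]

lemma Bpoly_zero : Bpoly 0 = 1 := by
  have h : univ.filter (fun u : Fin 0 → Fin 0 × Bool => IsSP u) = {Fin.elim0} := by decide
  rw [Bpoly, h, sum_singleton, show desB (Fin.elim0 : Fin 0 → Fin 0 × Bool) = 0 from rfl,
    pow_zero]

lemma Bpoly_succ (m : ℕ) :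
    Bpoly (m + 1) = (1 + X) * Bpoly m
      + 2 * ((m : ℝ[X]) * X * Bpoly m + X * (1 - X) * derivative (Bpoly m)) := by
  simp only [Bpoly, sum_isSP_succ_eq_sum_insertMax, sum_X_pow_desB_insertMax, mul_sum,
    derivative_sum, ← sum_add_distrib]

lemma Bplus_one : Bplus 1 = 1 := by
  have h : univ.filter (fun u : Fin 1 → Fin 1 × Bool => IsSP u ∧ 0 < letterW u (Fin.last 0))
      = {fun _ => (0, true)} := by decide
  rw [Bplus, h, sum_singleton, show desB (fun _ : Fin 1 => ((0 : Fin 1), true)) = 0 by decide,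
    pow_zero]

lemma Bplus_succ_succ (m : ℕ) :
    Bplus (m + 2) = Bpoly (m + 1)
      + 2 * (((m + 1 : ℕ) : ℝ[X]) * X * Bplus (m + 1)
        + X * (1 - X) * derivative (Bplus (m + 1))) := by
  have hsplit : Bplus (m + 2) = ∑ v ∈ univ.filter (fun v => IsSP v), (X ^ desB v
      + if 0 < letterW v (Fin.last m) then
          2 * (((m + 1 : ℕ) : ℝ[X]) * X * X ^ desB v + X * (1 - X) * derivative (X ^ desB v))
        else 0) := by
    rw [Bplus, ← filter_filter, sum_filter, sum_isSP_succ_eq_sum_insertMax]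
    exact sum_congr rfl fun v _ => sum_ite_pos_last_X_pow_desB_insertMax v
  rw [hsplit, sum_add_distrib, ← sum_filter, filter_filter, Bpoly, Bplus]
  simp only [mul_sum, derivative_sum, ← sum_add_distrib]

end Recursions

section PowerSeriesIdentities

open scoped PowerSeries

lemma PowerSeries.coeff_X_mul_derivative {R : Type*} [CommSemiring R] (f : R⟦X⟧) (n : ℕ) :
    PowerSeries.coeff n (PowerSeries.X * d⁄dX R f) = n * PowerSeries.coeff n f := by
  rcases n with _ | n
  · simp
  · rw [PowerSeries.coeff_succ_X_mul, PowerSeries.coeff_derivative, mul_comm]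
    push_cast
    rfl

lemma PowerSeries.one_sub_X_mul_derivative_one_sub_X_pow {R : Type*} [CommRing R] (k : ℕ) :
    (1 - PowerSeries.X) * d⁄dX R ((1 - PowerSeries.X) ^ k)
      = -(k : R⟦X⟧) * (1 - PowerSeries.X) ^ k := by
  rcases k with _ | k
  · simp
  · rw [Derivation.leibniz_pow, map_sub, PowerSeries.derivative_X, Derivation.map_one_eq_zero,
      Nat.add_sub_cancel, smul_eq_mul, nsmul_eq_mul]
    push_cast
    ring

@[simp, norm_cast]
lemma Polynomial.coe_natCast {R : Type*} [Semiring R] (n : ℕ) : ((n : R[X]) : R⟦X⟧) = n :=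
  map_natCast Polynomial.coeToPowerSeries.ringHom n

@[simp, norm_cast]
lemma Polynomial.coe_ofNat {R : Type*} [Semiring R] (n : ℕ) [n.AtLeastTwo] :
    ((ofNat(n) : R[X]) : R⟦X⟧) = OfNat.ofNat n :=
  map_ofNat Polynomial.coeToPowerSeries.ringHom n

noncomputable def oddPowerSeries (n : ℕ) : ℝ⟦X⟧ :=
  PowerSeries.mk fun i => ((2 * i + 1 : ℕ) : ℝ) ^ n

noncomputable def oddSubEvenPowerSeries (n : ℕ) : ℝ⟦X⟧ :=
  PowerSeries.mk fun i => ((2 * i + 1 : ℕ) : ℝ) ^ n - ((2 * i : ℕ) : ℝ) ^ n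

lemma oddPowerSeries_succ (n : ℕ) :
    oddPowerSeries (n + 1)
      = oddPowerSeries n + 2 * (PowerSeries.X * d⁄dX ℝ (oddPowerSeries n)) := by
  ext i
  simp only [oddPowerSeries, two_mul, map_add, PowerSeries.coeff_mk,
    PowerSeries.coeff_X_mul_derivative]
  push_cast
  ring

lemma oddSubEvenPowerSeries_succ (n : ℕ) :
    oddSubEvenPowerSeries (n + 1)
      = oddPowerSeries n + 2 * (PowerSeries.X * d⁄dX ℝ (oddSubEvenPowerSeries n)) := by
  ext i
  simp only [oddSubEvenPowerSeries, oddPowerSeries, two_mul, map_add, PowerSeries.coeff_mk,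
    PowerSeries.coeff_X_mul_derivative]
  push_cast
  ring

lemma coe_Bpoly (m : ℕ) : (Bpoly m : ℝ⟦X⟧) = (1 - PowerSeries.X) ^ (m + 1) * oddPowerSeries m := by
  induction m with
  | zero =>
    rw [Bpoly_zero, Polynomial.coe_one, zero_add, pow_one, mul_comm]
    exact (PowerSeries.mk_one_mul_one_sub_eq_one ℝ).symm
  | succ m ih =>
    rw [Bpoly_succ]
    simp only [Polynomial.coe_add, Polynomial.coe_mul, Polynomial.coe_sub, Polynomial.coe_one,
      Polynomial.coe_X, Polynomial.coe_natCast, Polynomial.coe_ofNat, ← PowerSeries.derivative_coe]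
    rw [ih, oddPowerSeries_succ, Derivation.leibniz, smul_eq_mul, smul_eq_mul]
    have h := PowerSeries.one_sub_X_mul_derivative_one_sub_X_pow (R := ℝ) (m + 1)
    push_cast at h
    linear_combination 2 * PowerSeries.X * oddPowerSeries m * h

lemma coe_Bplus_succ (m : ℕ) :
    (Bplus (m + 1) : ℝ⟦X⟧) = (1 - PowerSeries.X) ^ (m + 1) * oddSubEvenPowerSeries (m + 1) := by
  induction m with
  | zero =>
    have h : oddSubEvenPowerSeries 1 = PowerSeries.mk 1 := by
      ext i
      simp [oddSubEvenPowerSeries]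
    rw [Bplus_one, Polynomial.coe_one, zero_add, pow_one, h, mul_comm]
    exact (PowerSeries.mk_one_mul_one_sub_eq_one ℝ).symm
  | succ m ih =>
    rw [Bplus_succ_succ]
    simp only [Polynomial.coe_add, Polynomial.coe_mul, Polynomial.coe_sub, Polynomial.coe_one,
      Polynomial.coe_X, Polynomial.coe_natCast, Polynomial.coe_ofNat, ← PowerSeries.derivative_coe]
    rw [coe_Bpoly, ih, oddSubEvenPowerSeries_succ (m + 1), Derivation.leibniz, smul_eq_mul,
      smul_eq_mul]
    linear_combination 2 * PowerSeries.X * oddSubEvenPowerSeries (m + 1)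
      * PowerSeries.one_sub_X_mul_derivative_one_sub_X_pow (R := ℝ) (m + 1)

end PowerSeriesIdentities

/-- For `n ≥ 1`, in `ℝ⟦x⟧`:
`B_n^+(x) = (1−x)^n · Σ_{i≥0} ((2i+1)^n − (2i)^n) x^i`. -/
theorem Bplus_power_series_expansion (n : ℕ) (hn : 1 ≤ n) :
    (PowerSeries.mk fun k => (Bplus n).coeff k)
      = (1 - PowerSeries.X) ^ n *
          PowerSeries.mk (fun i => (((2 * i + 1 : ℕ) : ℝ) ^ n - ((2 * i : ℕ) : ℝ) ^ n)) := by
  obtain ⟨m, rfl⟩ := Nat.exists_eq_add_of_le' hn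
  exact coe_Bplus_succ m
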